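/- The general BD.I MNLS system i q⃗_t + q⃗_xx + 2(q⃗, p⃗)q⃗ − (q⃗, s_0 q⃗) s_0 p⃗ = 0, i p⃗_t − p⃗_xx − 2(q⃗, p⃗)p⃗ + (p⃗, s_0 p⃗) s_0 q⃗ = 0 is consistent with the nonlocal reduction p⃗(x,t) = −q⃗*(−x,t): substituting this reduction into the second equation yields exactly the complex conjugate of the first equation evaluated at −x, so the reduced system is i q⃗_t(x,t) + q⃗_xx(x,t) − 2(q⃗(x,t), q⃗*(−x,t)) q⃗(x,t) + (q⃗(x,t), s_0 q⃗(x,t)) s_0 q⃗*(−x,t) = 0. -/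

import Mathlib

open Matrix

noncomputable section

def S0 (n : ℕ) : Matrix (Fin n) (Fin n) ℂ :=
  Matrix.of fun i j => if (i : ℕ) + (j : ℕ) = n - 1 then (-1 : ℂ) ^ (i : ℕ) else 0

/-- The bilinear (not sesquilinear) pairing `(u⃗, v⃗) = Σ_k u_k v_k`. -/
def bil {n : ℕ} (u v : Fin n → ℂ) : ℂ := ∑ k, u k * v k

/-- The BD.I MNLS system
`i q⃗_t + q⃗_xx + 2(q⃗,p⃗)q⃗ − (q⃗,s₀q⃗) s₀p⃗ = 0`,
`i p⃗_t − p⃗_xx − 2(q⃗,p⃗)p⃗ + (p⃗,s₀p⃗) s₀q⃗ = 0`. -/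
def BDI (r : ℕ) (q p : ℝ → ℝ → Fin (2*r-1) → ℂ) : Prop :=
  ∀ (x t : ℝ) (k : Fin (2*r-1)),
    (Complex.I * deriv (fun s => q x s k) t + iteratedDeriv 2 (fun y => q y t k) x
      + 2 * bil (q x t) (p x t) * q x t k
      - bil (q x t) ((S0 (2*r-1)).mulVec (q x t)) * ((S0 (2*r-1)).mulVec (p x t)) k = 0) ∧
    (Complex.I * deriv (fun s => p x s k) t - iteratedDeriv 2 (fun y => p y t k) x
      - 2 * bil (q x t) (p x t) * p x t k
      + bil (p x t) ((S0 (2*r-1)).mulVec (p x t)) * ((S0 (2*r-1)).mulVec (q x t)) k = 0)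

lemma conj_S0 (n : ℕ) (i j : Fin n) : (starRingEnd ℂ) (S0 n i j) = S0 n i j := by
  simp only [S0, Matrix.of_apply]
  split <;> simp

lemma conj_mulVec {n : ℕ} (v : Fin n → ℂ) (k : Fin n) :
    (starRingEnd ℂ) ((S0 n).mulVec v k) = (S0 n).mulVec (fun j => (starRingEnd ℂ) (v j)) k := by
  simp only [Matrix.mulVec, dotProduct, map_sum, _root_.map_mul, conj_S0]

lemma conj_bil {n : ℕ} (u v : Fin n → ℂ) :
    (starRingEnd ℂ) (bil u v)
      = bil (fun j => (starRingEnd ℂ) (u j)) (fun j => (starRingEnd ℂ) (v j)) := by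
  simp only [bil, map_sum, _root_.map_mul]

lemma bil_neg_right {n : ℕ} (u v : Fin n → ℂ) : bil u (fun j => -v j) = -bil u v := by
  simp [bil, mul_neg, Finset.sum_neg_distrib]

lemma bil_neg_left {n : ℕ} (u v : Fin n → ℂ) : bil (fun j => -u j) v = -bil u v := by
  simp [bil, neg_mul, Finset.sum_neg_distrib]

lemma bil_comm {n : ℕ} (u v : Fin n → ℂ) : bil u v = bil v u := by
  simp [bil, mul_comm]

lemma mulVec_neg' {n : ℕ} (v : Fin n → ℂ) (k : Fin n) :
    (S0 n).mulVec (fun j => -v j) k = -((S0 n).mulVec v k) := by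
  have : (fun j => -v j) = -v := rfl
  rw [this, Matrix.mulVec_neg]; rfl

lemma iteratedDeriv_two_star (f : ℝ → ℂ) (x : ℝ) :
    iteratedDeriv 2 (fun y => (starRingEnd ℂ) (f y)) x
      = (starRingEnd ℂ) (iteratedDeriv 2 f x) := by
  have h : (fun y => (starRingEnd ℂ) (f y)) = fun y => star (f y) := rfl
  rw [h, show (2:ℕ) = 1+1 from rfl, iteratedDeriv_succ, iteratedDeriv_one,
    iteratedDeriv_succ, iteratedDeriv_one, deriv.star', deriv.star]
  rfl

/-- The BD.I MNLS system is consistent with the nonlocal reduction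
`p⃗(x,t) = −q⃗*(−x,t)`: if `q⃗` satisfies the first (q-) equation with this `p⃗`,
then the second (p-) equation holds automatically — it is the complex conjugate
of the first at `−x` — so the pair solves the full system, and `q⃗` satisfies
the reduced nonlocal equation
`i q⃗_t(x) + q⃗_xx(x) − 2(q⃗(x),q⃗*(−x))q⃗(x) + (q⃗(x),s₀q⃗(x)) s₀q⃗*(−x) = 0`. -/
theorem nonlocal_reduction_consistent (r : ℕ)
    (q : ℝ → ℝ → Fin (2*r-1) → ℂ)
    (hsmooth_x : ∀ (t : ℝ) (k : Fin (2*r-1)), ContDiff ℝ (⊤ : ℕ∞) (fun x => q x t k))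
    (hsmooth_t : ∀ (x : ℝ) (k : Fin (2*r-1)), Differentiable ℝ (fun t => q x t k))
    (p : ℝ → ℝ → Fin (2*r-1) → ℂ)
    (hp : ∀ x t k, p x t k = -((starRingEnd ℂ) (q (-x) t k)))
    (heq1 : ∀ (x t : ℝ) (k : Fin (2*r-1)),
      Complex.I * deriv (fun s => q x s k) t + iteratedDeriv 2 (fun y => q y t k) x
        + 2 * bil (q x t) (p x t) * q x t k
        - bil (q x t) ((S0 (2*r-1)).mulVec (q x t)) * ((S0 (2*r-1)).mulVec (p x t)) k = 0) :
    BDI r q p ∧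
    (∀ (x t : ℝ) (k : Fin (2*r-1)),
      Complex.I * deriv (fun s => q x s k) t + iteratedDeriv 2 (fun y => q y t k) x
        - 2 * bil (q x t) (fun j => (starRingEnd ℂ) (q (-x) t j)) * q x t k
        + bil (q x t) ((S0 (2*r-1)).mulVec (q x t))
          * ((S0 (2*r-1)).mulVec (fun j => (starRingEnd ℂ) (q (-x) t j))) k = 0) := by
  have hc1 : ∀ (y s : ℝ) (j : Fin (2*r-1)),
      (starRingEnd ℂ) (q y s j) = -(p (-y) s j) := by
    intro y s j; rw [hp, neg_neg, neg_neg]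
  have hc2 : ∀ (y s : ℝ) (j : Fin (2*r-1)),
      (starRingEnd ℂ) (p y s j) = -(q (-y) s j) := by
    intro y s j; rw [hp]; simp
  constructor
  · intro x t k
    refine ⟨heq1 x t k, ?_⟩
    -- facts about conjugates of the pieces of heq1 at -x
    have e1 : (fun j => (starRingEnd ℂ) (q (-x) t j)) = fun j => -(p x t j) := by
      funext j; rw [hc1]; rw [neg_neg]
    have e2 : (fun j => (starRingEnd ℂ) (p (-x) t j)) = fun j => -(q x t j) := by
      funext j; rw [hc2]; rw [neg_neg]
    have h1 : (starRingEnd ℂ) (deriv (fun s => q (-x) s k) t)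
        = -(deriv (fun s => p x s k) t) := by
      have hs : (fun s => (starRingEnd ℂ) (q (-x) s k)) = fun s => -(p x s k) := by
        funext s; rw [hc1, neg_neg]
      calc (starRingEnd ℂ) (deriv (fun s => q (-x) s k) t)
          = deriv (fun s => star (q (-x) s k)) t := (deriv.star).symm
        _ = deriv (fun s => -(p x s k)) t := by rw [show (fun s => star (q (-x) s k)) = fun s => (starRingEnd ℂ) (q (-x) s k) from rfl, hs]
        _ = -(deriv (fun s => p x s k) t) := deriv.neg
    have h2 : (starRingEnd ℂ) (iteratedDeriv 2 (fun y => q y t k) (-x))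
        = -(iteratedDeriv 2 (fun y => p y t k) x) := by
      rw [← iteratedDeriv_two_star]
      have hs : (fun y => (starRingEnd ℂ) (q y t k)) = fun y => -(p (-y) t k) := by
        funext y; rw [hc1]
      rw [hs, iteratedDeriv_fun_neg]
      have hcn := iteratedDeriv_comp_neg 2 (fun y => p y t k) (-x)
      rw [hcn, neg_neg]
      norm_num
    have h3 : (starRingEnd ℂ) (bil (q (-x) t) (p (-x) t)) = bil (q x t) (p x t) := by
      rw [conj_bil, e1, e2, bil_neg_left, bil_neg_right, neg_neg, bil_comm]
    have h4 : (starRingEnd ℂ) (q (-x) t k) = -(p x t k) := by rw [hc1, neg_neg]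
    have em : (fun j => (starRingEnd ℂ) ((S0 (2*r-1)).mulVec (q (-x) t) j))
        = fun j => -((S0 (2*r-1)).mulVec (p x t) j) := by
      funext j; rw [conj_mulVec, e1, mulVec_neg']
    have h5 : (starRingEnd ℂ) (bil (q (-x) t) ((S0 (2*r-1)).mulVec (q (-x) t)))
        = bil (p x t) ((S0 (2*r-1)).mulVec (p x t)) := by
      rw [conj_bil, e1, em, bil_neg_left, bil_neg_right, neg_neg]
    have h6 : (starRingEnd ℂ) ((S0 (2*r-1)).mulVec (p (-x) t) k)
        = -((S0 (2*r-1)).mulVec (q x t) k) := by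
      rw [conj_mulVec, e2, mulVec_neg']
    have key := congrArg (starRingEnd ℂ) (heq1 (-x) t k)
    simp only [map_zero, map_add, map_sub, _root_.map_mul, Complex.conj_I, map_ofNat] at key
    rw [h1, h2, h3, h4, h5, h6] at key
    linear_combination key
  · intro x t k
    have h := heq1 x t k
    have hpfun : p x t = fun j => -((starRingEnd ℂ) (q (-x) t j)) := funext fun j => hp x t j
    rw [hpfun, bil_neg_right, mulVec_neg'] at h
    linear_combination h
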